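/- arXiv:math/0312037 — 2 statements merged into one kernel-verified Lean document; each statement's English description precedes it below -/
import Mathlib

section
/- Let $X$ be a nonnegative random variable such that $E[\exp(b X^a)] < \infty$ for some $a, b > 0$, and suppose there exist $p_0 \geq 1$ and a nonnegative random variable $Y$ with $E[Y^p] \leq 4 E[X^p] < \infty$ for all $p > p_0$, and $E[Y^p] < \infty$ for all finite $p > 0$. Then $E[\exp(b Y^a)] < \infty$. -/
open MeasureTheory
open scoped ENNReal NNReal

private lemma exp_series_lintegral {Ω : Type*} [MeasurableSpace Ω] (P : Measure Ω)
    (Z : Ω → ℝ) (hZ0 : ∀ ω, 0 ≤ Z ω) (hZm : Measurable Z) (a b : ℝ) (hb : 0 < b) :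
    ∫⁻ ω, ENNReal.ofReal (Real.exp (b * Z ω ^ a)) ∂P
      = ∑' k : ℕ, ENNReal.ofReal (b ^ k / k.factorial)
          * ∫⁻ ω, ENNReal.ofReal (Z ω ^ (a * k)) ∂P := by
  have hpt : ∀ ω, ENNReal.ofReal (Real.exp (b * Z ω ^ a))
      = ∑' k : ℕ, ENNReal.ofReal (b ^ k / k.factorial * Z ω ^ (a * k)) := by
    intro ω
    have h1 : Real.exp (b * Z ω ^ a) = ∑' k : ℕ, (b * Z ω ^ a) ^ k / k.factorial := by
      rw [Real.exp_eq_exp_ℝ, NormedSpace.exp_eq_tsum_div]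
    have h2 : ∀ k : ℕ, (b * Z ω ^ a) ^ k / k.factorial
        = b ^ k / k.factorial * Z ω ^ (a * k) := by
      intro k
      have : Z ω ^ (a * k) = (Z ω ^ a) ^ k := by
        rw [Real.rpow_mul (hZ0 ω), Real.rpow_natCast]
      rw [this, mul_pow]; ring
    rw [h1, ENNReal.ofReal_tsum_of_nonneg
      (fun k => div_nonneg (pow_nonneg (mul_nonneg hb.le (Real.rpow_nonneg (hZ0 ω) a)) k) (Nat.cast_nonneg _)) (Real.summable_pow_div_factorial _)]
    exact tsum_congr fun k => by rw [h2 k]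
  have hmeas : ∀ k : ℕ, Measurable fun ω => ENNReal.ofReal (b ^ k / k.factorial * Z ω ^ (a * k)) :=
    fun k => (measurable_const.mul ((hZm.pow measurable_const))).ennreal_ofReal
  calc ∫⁻ ω, ENNReal.ofReal (Real.exp (b * Z ω ^ a)) ∂P
      = ∫⁻ ω, ∑' k : ℕ, ENNReal.ofReal (b ^ k / k.factorial * Z ω ^ (a * k)) ∂P := by
        exact lintegral_congr fun ω => hpt ω
    _ = ∑' k : ℕ, ∫⁻ ω, ENNReal.ofReal (b ^ k / k.factorial * Z ω ^ (a * k)) ∂P :=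
        lintegral_tsum fun k => (hmeas k).aemeasurable
    _ = ∑' k : ℕ, ENNReal.ofReal (b ^ k / k.factorial)
          * ∫⁻ ω, ENNReal.ofReal (Z ω ^ (a * k)) ∂P := by
        refine tsum_congr fun k => ?_
        rw [← lintegral_const_mul _ ((hZm.pow measurable_const).ennreal_ofReal)]
        refine lintegral_congr fun ω => ?_
        rw [← ENNReal.ofReal_mul (by positivity)]

theorem stmt_2 {Ω : Type*} [MeasurableSpace Ω] (P : Measure Ω) [IsProbabilityMeasure P]
    (X Y : Ω → ℝ) (hX0 : ∀ ω, 0 ≤ X ω) (hY0 : ∀ ω, 0 ≤ Y ω)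
    (hXm : Measurable X) (hYm : Measurable Y)
    (a b : ℝ) (ha : 0 < a) (hb : 0 < b)
    (hXexp : Integrable (fun ω => Real.exp (b * X ω ^ a)) P)
    (p0 : ℝ) (hp0 : 1 ≤ p0)
    (hXp : ∀ p > p0, Integrable (fun ω => X ω ^ p) P)
    (hcmp : ∀ p > p0, ∫ ω, Y ω ^ p ∂P ≤ 4 * ∫ ω, X ω ^ p ∂P)
    (hYp : ∀ p > (0:ℝ), Integrable (fun ω => Y ω ^ p) P) :
    Integrable (fun ω => Real.exp (b * Y ω ^ a)) P := by
  have hmeasY : Measurable fun ω => Real.exp (b * Y ω ^ a) :=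
    ((measurable_const.mul (hYm.pow measurable_const))).exp
  have hnn : 0 ≤ᵐ[P] fun ω => Real.exp (b * Y ω ^ a) :=
    Filter.Eventually.of_forall fun ω => (Real.exp_pos _).le
  refine ⟨hmeasY.aestronglyMeasurable, (hasFiniteIntegral_iff_ofReal hnn).2 ?_⟩
  -- choose N with a * N > p0
  obtain ⟨N, hN⟩ : ∃ N : ℕ, p0 < a * N := by
    obtain ⟨N, hN⟩ := exists_nat_gt (p0 / a)
    exact ⟨N, by rwa [div_lt_iff₀ ha, mul_comm] at hN⟩
  have hN1 : 1 ≤ N := by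
    rcases Nat.eq_zero_or_pos N with rfl | h
    · simp at hN; linarith
    · exact h
  set I : ℕ → ℝ≥0∞ := fun k => ENNReal.ofReal (b ^ k / k.factorial)
      * ∫⁻ ω, ENNReal.ofReal (Y ω ^ (a * k)) ∂P with hI
  set J : ℕ → ℝ≥0∞ := fun k => ENNReal.ofReal (b ^ k / k.factorial)
      * ∫⁻ ω, ENNReal.ofReal (X ω ^ (a * k)) ∂P with hJ
  rw [exp_series_lintegral P Y hY0 hYm a b hb]
  -- the X-series is finite
  have hJsum : ∑' k, J k < ⊤ := by
    rw [← exp_series_lintegral P X hX0 hXm a b hb]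
    exact hXexp.lintegral_lt_top
  -- tail comparison: for k ≥ N, I k ≤ 4 * J k
  have htail : ∀ k : ℕ, N ≤ k → I k ≤ 4 * J k := by
    intro k hk
    have hak : p0 < a * (k : ℝ) := by
      have : a * (N : ℝ) ≤ a * k :=
        mul_le_mul_of_nonneg_left (by exact_mod_cast hk) ha.le
      linarith
    have hYint := hYp (a * k) (lt_of_le_of_lt (by linarith) hak)
    have hXint := hXp (a * k) hak
    have hYe : ∫⁻ ω, ENNReal.ofReal (Y ω ^ (a * (k : ℝ))) ∂P
        = ENNReal.ofReal (∫ ω, Y ω ^ (a * (k : ℝ)) ∂P) :=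
      (ofReal_integral_eq_lintegral_ofReal hYint
        (Filter.Eventually.of_forall fun ω => Real.rpow_nonneg (hY0 ω) _)).symm
    have hXe : ∫⁻ ω, ENNReal.ofReal (X ω ^ (a * (k : ℝ))) ∂P
        = ENNReal.ofReal (∫ ω, X ω ^ (a * (k : ℝ)) ∂P) :=
      (ofReal_integral_eq_lintegral_ofReal hXint
        (Filter.Eventually.of_forall fun ω => Real.rpow_nonneg (hX0 ω) _)).symm
    simp only [hI, hJ]
    rw [hYe, hXe, mul_comm (4 : ℝ≥0∞), mul_assoc]
    refine mul_le_mul_right ?_ _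
    calc ENNReal.ofReal (∫ ω, Y ω ^ (a * (k : ℝ)) ∂P)
        ≤ ENNReal.ofReal (4 * ∫ ω, X ω ^ (a * (k : ℝ)) ∂P) :=
          ENNReal.ofReal_le_ofReal (hcmp _ hak)
      _ = ENNReal.ofReal (∫ ω, X ω ^ (a * (k : ℝ)) ∂P) * 4 := by
          rw [ENNReal.ofReal_mul (by norm_num), mul_comm]
          norm_num
  -- each head term is finite
  have hhead : ∀ k : ℕ, I k < ⊤ := by
    intro k
    rcases Nat.eq_zero_or_pos k with rfl | hk
    · simp only [hI]
      have h1 : ∫⁻ ω, ENNReal.ofReal (Y ω ^ (a * ((0:ℕ):ℝ))) ∂P = 1 := by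
        simp [Real.rpow_zero]
      simp [h1]
    · have hk' : (0:ℝ) < a * k := by
        have : (1:ℝ) ≤ k := by exact_mod_cast hk
        nlinarith
      have hint := hYp (a * k) hk'
      exact ENNReal.mul_lt_top ENNReal.ofReal_lt_top hint.lintegral_lt_top
  -- bound every term
  set F : ℕ → ℝ≥0∞ := fun k => if k < N then I k else 0 with hF
  have hbound : ∀ k, I k ≤ F k + 4 * J k := by
    intro k
    by_cases h : k < N
    · simp only [hF, if_pos h]; exact le_add_right le_rfl
    · simpa only [hF, if_neg h, zero_add] using htail k (not_lt.1 h)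
  calc ∑' k, I k ≤ ∑' k, (F k + 4 * J k) := ENNReal.tsum_le_tsum hbound
    _ = ∑' k, F k + ∑' k, 4 * J k := ENNReal.tsum_add
    _ = ∑' k, F k + 4 * ∑' k, J k := by rw [ENNReal.tsum_mul_left]
    _ < ⊤ := by
        refine ENNReal.add_lt_top.2 ⟨?_, ENNReal.mul_lt_top (by norm_num) hJsum⟩
        have hFs : ∑' k, F k = ∑ k ∈ Finset.range N, F k :=
          tsum_eq_sum fun k hk => by
            simp only [Finset.mem_range, not_lt] at hk
            exact if_neg (not_lt.2 hk)
        rw [hFs]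
        refine ENNReal.sum_lt_top.2 fun k _ => ?_
        simp only [hF]
        split
        · exact hhead k
        · exact ENNReal.zero_lt_top
end

section
/- Let $K > 0$ and $0 < \alpha < 1$, and define $H(x) = e^{-K x^{1-\alpha}} \int_0^x e^{K s^{1-\alpha}}\, ds$ for $x > 0$. Set $x_0 = \left( \frac{\ln 2}{K} + 1 \right)^{1/(1-\alpha)}$. Then $H(x) \geq \frac{1}{2K(1-\alpha)}$ for all $x \geq x_0$. -/
/-!
On `[1, x]` the integrand `exp (K s^(1-α))` dominates `s^(-α) exp (K s^(1-α))`, which is the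
derivative of `exp (K s^(1-α)) / (K (1-α))`. Dropping the nonnegative integral over `[0, 1]` gives
`H x ≥ (1 - exp (K (1 - x^(1-α)))) / (K (1-α))`, and the choice of `x₀` makes
`exp (K (1 - x^(1-α))) ≤ 1/2`.
-/

open Real intervalIntegral

lemma hasDerivAt_exp_mul_rpow (K α : ℝ) {s : ℝ} (hs : 0 < s) :
    HasDerivAt (fun t => exp (K * t ^ (1 - α)))
      (K * (1 - α) * (s ^ (-α) * exp (K * s ^ (1 - α)))) s := by
  have h := ((hasDerivAt_rpow_const (p := 1 - α) (Or.inl hs.ne')).const_mul K).exp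
  convert h using 1
  rw [sub_sub_cancel_left]
  ring

lemma intervalIntegrable_rpow_neg_mul_exp_mul_rpow (K α : ℝ) {a b : ℝ} (ha : 0 < a)
    (hb : 0 < b) :
    IntervalIntegrable (fun s => s ^ (-α) * exp (K * s ^ (1 - α))) MeasureTheory.volume a b := by
  refine ContinuousOn.intervalIntegrable fun s hs => ?_
  have hs0 : 0 < s := lt_of_lt_of_le (lt_min ha hb) hs.1
  exact ((continuousAt_rpow_const s (-α) (Or.inl hs0.ne')).mul
    (hasDerivAt_exp_mul_rpow K α hs0).continuousAt).continuousWithinAt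

lemma integral_rpow_neg_mul_exp_mul_rpow {K α a b : ℝ} (hK : K ≠ 0) (hα : α ≠ 1)
    (ha : 0 < a) (hb : 0 < b) :
    ∫ s in a..b, s ^ (-α) * exp (K * s ^ (1 - α)) =
      (exp (K * b ^ (1 - α)) - exp (K * a ^ (1 - α))) / (K * (1 - α)) := by
  have hpos : ∀ s ∈ Set.uIcc a b, 0 < s := fun s hs =>
    lt_of_lt_of_le (lt_min ha hb) hs.1
  have hKα : K * (1 - α) ≠ 0 := mul_ne_zero hK (sub_ne_zero.2 hα.symm)
  rw [eq_div_iff hKα, mul_comm, ← integral_const_mul]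
  exact integral_eq_sub_of_hasDerivAt (fun s hs => hasDerivAt_exp_mul_rpow K α (hpos s hs))
    ((intervalIntegrable_rpow_neg_mul_exp_mul_rpow K α ha hb).const_mul _)

lemma sub_div_le_integral_exp_mul_rpow {K α x : ℝ} (hK : K ≠ 0) (hα0 : 0 ≤ α) (hα1 : α < 1)
    (hx : 1 ≤ x) :
    (exp (K * x ^ (1 - α)) - exp K) / (K * (1 - α)) ≤
      ∫ s in (0 : ℝ)..x, exp (K * s ^ (1 - α)) := by
  have hcont : Continuous fun s : ℝ => exp (K * s ^ (1 - α)) := by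
    have := continuous_rpow_const (q := 1 - α) (by linarith)
    fun_prop
  have hint (a b : ℝ) :
      IntervalIntegrable (fun s => exp (K * s ^ (1 - α))) MeasureTheory.volume a b :=
    hcont.intervalIntegrable a b
  have h01 : 0 ≤ ∫ s in (0 : ℝ)..1, exp (K * s ^ (1 - α)) :=
    integral_nonneg zero_le_one fun s _ => (exp_pos _).le
  have h1x : ∫ s in (1 : ℝ)..x, s ^ (-α) * exp (K * s ^ (1 - α)) ≤
      ∫ s in (1 : ℝ)..x, exp (K * s ^ (1 - α)) :=
    integral_mono_on hx (intervalIntegrable_rpow_neg_mul_exp_mul_rpow K α one_pos (by linarith))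
      (hint 1 x) fun s hs => mul_le_of_le_one_left (exp_pos _).le
        (rpow_le_one_of_one_le_of_nonpos hs.1 (neg_nonpos.2 hα0))
  have hformula := integral_rpow_neg_mul_exp_mul_rpow hK hα1.ne one_pos (by linarith : 0 < x)
  rw [one_rpow, mul_one] at hformula
  rw [← integral_add_adjacent_intervals (hint 0 1) (hint 1 x)]
  linarith

lemma one_div_two_mul_le_exp_neg_mul_sub_div {K c y : ℝ} (hK : 0 < K) (hc : 0 < c)
    (hy : log 2 ≤ K * (y - 1)) :
    1 / (2 * K * c) ≤ exp (-K * y) * ((exp (K * y) - exp K) / (K * c)) := by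
  have hsmall : exp (K - K * y) ≤ 1 / 2 := by
    calc exp (K - K * y) ≤ exp (-log 2) := exp_le_exp.2 (by linarith)
      _ = 1 / 2 := by rw [exp_neg, exp_log two_pos, one_div]
  have hexpand : exp (-K * y) * (exp (K * y) - exp K) = 1 - exp (K - K * y) := by
    rw [mul_sub, ← exp_add, ← exp_add, neg_mul, neg_add_cancel, exp_zero, neg_add_eq_sub]
  rw [mul_div_assoc', hexpand, div_le_div_iff₀ (by positivity) (by positivity)]
  nlinarith [mul_pos hK hc]

theorem stmt_13 (K α : ℝ) (hK : 0 < K) (hα0 : 0 < α) (hα1 : α < 1)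
    (H : ℝ → ℝ)
    (hH : ∀ x > (0:ℝ),
      H x = Real.exp (-K * x ^ (1 - α)) * ∫ s in (0:ℝ)..x, Real.exp (K * s ^ (1 - α)))
    (x₀ : ℝ) (hx₀ : x₀ = (Real.log 2 / K + 1) ^ ((1:ℝ) / (1 - α))) :
    ∀ x ≥ x₀, 1 / (2 * K * (1 - α)) ≤ H x := by
  intro x hx
  have hc : 0 < 1 - α := by linarith
  have hbase : 1 ≤ log 2 / K + 1 := by
    have : 0 ≤ log 2 / K := by positivity
    linarith
  have hx1 : 1 ≤ x := (hx₀ ▸ one_le_rpow hbase (by positivity)).trans hx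
  have hxc : log 2 / K + 1 ≤ x ^ (1 - α) :=
    (rpow_inv_le_iff_of_pos (by linarith) (by linarith) hc).1 (by rwa [← one_div, ← hx₀])
  have hlog : log 2 ≤ K * (x ^ (1 - α) - 1) := by
    rw [mul_comm, ← div_le_iff₀ hK]
    linarith
  rw [hH x (by linarith)]
  exact (one_div_two_mul_le_exp_neg_mul_sub_div hK hc hlog).trans <| mul_le_mul_of_nonneg_left
    (sub_div_le_integral_exp_mul_rpow hK.ne' hα0.le hα1 hx1) (exp_pos _).le
end
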